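/- arXiv:0903.0610 — 3 statements merged into one kernel-verified Lean document; each statement's English description precedes it below -/
import Mathlib

section
/- Let W and V be finite dimensional normed linear spaces with dim W = dim V, and let L : V → W' be a linear operator (W' the dual of W). If inf_{v ∈ V, ‖v‖_V = 1} sup_{w ∈ W, ‖w‖_W = 1} ⟨Lv, w⟩ = γ > 0, then L is invertible, and for every f ∈ W', the unique solution u of Lu = f satisfies ‖u‖_V ≤ (1/γ) ‖f‖_{W'}. -/
/-!
Since `⨆_{‖w‖=1} ⟨Lv, w⟩ ≤ ‖Lv‖`, the inf-sup condition gives `γ ‖v‖ ≤ ‖Lv‖` for every `v`.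
This makes `L` injective with the stated bound, and `dim V = dim W = dim W'` upgrades
injectivity to bijectivity.
-/

open Module

theorem finrank_strongDual (𝕜 W : Type*) [NontriviallyNormedField 𝕜] [CompleteSpace 𝕜]
    [NormedAddCommGroup W] [NormedSpace 𝕜 W] [FiniteDimensional 𝕜 W] :
    finrank 𝕜 (StrongDual 𝕜 W) = finrank 𝕜 W := by
  rw [← LinearMap.toContinuousLinearMap.finrank_eq, Subspace.dual_finrank_eq]

section UnitSphere

variable {W : Type*} [NormedAddCommGroup W] [NormedSpace ℝ W]

theorem StrongDual.bddAbove_range_unitSphere (φ : StrongDual ℝ W) :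
    BddAbove (Set.range fun w : {w : W // ‖w‖ = 1} => φ w.1) :=
  ⟨‖φ‖, Set.forall_mem_range.2 fun w => (le_abs_self _).trans (φ.unit_le_opNorm _ w.2.le)⟩

theorem StrongDual.iSup_unitSphere_le_norm (φ : StrongDual ℝ W) :
    ⨆ w : {w : W // ‖w‖ = 1}, φ w.1 ≤ ‖φ‖ :=
  Real.iSup_le (fun w => (le_abs_self _).trans (φ.unit_le_opNorm _ w.2.le)) (norm_nonneg φ)

-- Testing against both `w` and `-w` shows the supremum is at least `|φ w| ≥ 0`.
theorem StrongDual.iSup_unitSphere_nonneg (φ : StrongDual ℝ W) :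
    0 ≤ ⨆ w : {w : W // ‖w‖ = 1}, φ w.1 := by
  rcases isEmpty_or_nonempty {w : W // ‖w‖ = 1} with _ | ⟨⟨w⟩⟩
  · simp
  have hw := le_ciSup φ.bddAbove_range_unitSphere w
  have hnegw := le_ciSup φ.bddAbove_range_unitSphere ⟨-w.1, by rw [norm_neg, w.2]⟩
  simp only [map_neg] at hnegw
  linarith

end UnitSphere

section InfSup

variable {V W : Type*} [NormedAddCommGroup V] [NormedSpace ℝ V]
  [NormedAddCommGroup W] [NormedSpace ℝ W]

theorem mul_norm_le_norm_apply_of_le_iInf_iSup (L : V →ₗ[ℝ] StrongDual ℝ W) {γ : ℝ}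
    (hγ : γ ≤ ⨅ v : {v : V // ‖v‖ = 1}, ⨆ w : {w : W // ‖w‖ = 1}, L v.1 w.1) (v : V) :
    γ * ‖v‖ ≤ ‖L v‖ := by
  rcases eq_or_ne v 0 with rfl | hv
  · simp
  have hbdd : BddBelow (Set.range fun u : {v : V // ‖v‖ = 1} =>
      ⨆ w : {w : W // ‖w‖ = 1}, L u.1 w.1) :=
    ⟨0, Set.forall_mem_range.2 fun u => (L u.1).iSup_unitSphere_nonneg⟩
  have hunit : ‖(‖v‖⁻¹ : ℝ) • v‖ = 1 := norm_smul_inv_norm hv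
  have hγ_le : γ ≤ ‖v‖⁻¹ * ‖L v‖ :=
    calc γ ≤ ⨆ w : {w : W // ‖w‖ = 1}, L (‖v‖⁻¹ • v) w.1 :=
          hγ.trans (ciInf_le hbdd ⟨_, hunit⟩)
      _ ≤ ‖L (‖v‖⁻¹ • v)‖ := (L _).iSup_unitSphere_le_norm
      _ = ‖v‖⁻¹ * ‖L v‖ := by rw [map_smul, norm_smul, norm_inv, norm_norm]
  rwa [le_inv_mul_iff₀ (norm_pos_iff.2 hv), mul_comm] at hγ_le

theorem norm_le_inv_mul_norm_apply_of_le_iInf_iSup (L : V →ₗ[ℝ] StrongDual ℝ W) {γ : ℝ}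
    (hγ_pos : 0 < γ)
    (hγ : γ ≤ ⨅ v : {v : V // ‖v‖ = 1}, ⨆ w : {w : W // ‖w‖ = 1}, L v.1 w.1) (v : V) :
    ‖v‖ ≤ γ⁻¹ * ‖L v‖ :=
  (le_inv_mul_iff₀ hγ_pos).2 (mul_norm_le_norm_apply_of_le_iInf_iSup L hγ v)

theorem LinearMap.injective_of_norm_le_mul_norm_apply {F : Type*} [NormedAddCommGroup F]
    [Module ℝ F] (L : V →ₗ[ℝ] F) {C : ℝ} (hL : ∀ v, ‖v‖ ≤ C * ‖L v‖) :
    Function.Injective L := by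
  rw [← LinearMap.ker_eq_bot, LinearMap.ker_eq_bot']
  intro v hv
  exact norm_le_zero_iff.1 ((hL v).trans_eq (by rw [hv, norm_zero, mul_zero]))

end InfSup

/-- Inf-sup condition: if `L : V → W'` between finite-dimensional normed spaces of
equal dimension satisfies `inf_{‖v‖=1} sup_{‖w‖=1} ⟨Lv, w⟩ = γ > 0`, then `L` is
invertible and the solution of `Lu = f` satisfies `‖u‖ ≤ γ⁻¹ ‖f‖`. -/
theorem infsup_stability
    (V W : Type*) [NormedAddCommGroup V] [NormedSpace ℝ V]
    [NormedAddCommGroup W] [NormedSpace ℝ W]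
    [FiniteDimensional ℝ V] [FiniteDimensional ℝ W]
    (hdim : Module.finrank ℝ W = Module.finrank ℝ V)
    (L : V →ₗ[ℝ] StrongDual ℝ W) (γ : ℝ) (hγ : 0 < γ)
    (hinfsup : (⨅ v : {v : V // ‖v‖ = 1}, ⨆ w : {w : W // ‖w‖ = 1},
      L v.1 w.1) = γ) :
    Function.Bijective L ∧
      ∀ f : StrongDual ℝ W, ∀ u : V, L u = f → ‖u‖ ≤ (1/γ) * ‖f‖ := by
  have hstab := norm_le_inv_mul_norm_apply_of_le_iInf_iSup L hγ hinfsup.ge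
  have hinj := L.injective_of_norm_le_mul_norm_apply hstab
  have hrank : finrank ℝ V = finrank ℝ (StrongDual ℝ W) := by
    rw [finrank_strongDual, hdim]
  refine ⟨⟨hinj, (LinearMap.injective_iff_surjective_of_finrank_eq_finrank hrank).1 hinj⟩, ?_⟩
  rintro f u rfl
  simpa only [one_div] using hstab u
end

section
/- For the choice η defined by η_p = 1/(2ε), η_q = −1/(2ε), and η_i = 0 otherwise, where ξ_p = max_j ξ_j and ξ_q = min_j ξ_j for a nonzero mean-zero vector ξ, one has η ∈ R^{2N}_*, ‖η‖_{ℓ^1_ε} = 1, and 2⟨Aξ, η⟩ ≥ γ(|ξ_p| + |ξ_q|), under the diagonal dominance hypothesis min_i (A_{ii} + Σ_{j≠i} min(0,A_{ij})) − max_i Σ_{j≠i} max(0,A_{ij}) = γ > 0. -/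
/-!
Only rows `p` and `q` of `Aξ` enter `⟨Aξ, η⟩`, which equals `((Aξ)_p - (Aξ)_q) / 2`.
Since `ξ_q ≤ ξ_j ≤ ξ_p`, every off-diagonal term `A_pj ξ_j` is at least
`min(0, A_pj) ξ_p + max(0, A_pj) ξ_q`, and the mirror bound holds in row `q`. As `ξ` has mean
zero and is nonzero, `ξ_p > 0 > ξ_q`, so the row quantities can be replaced by their extremes
over all rows, which differ by `γ`.
-/

open Finset

variable {ι : Type*} {S : Finset ι} {ξ : ι → ℝ}

lemma pos_of_isMaxOn_of_sum_eq_zero {p : ι} (hmax : IsMaxOn ξ S p) (hsum : ∑ j ∈ S, ξ j = 0)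
    (hξ : ∃ j ∈ S, ξ j ≠ 0) : 0 < ξ p := by
  obtain ⟨j, hj, hpos⟩ := exists_pos_of_sum_zero_of_exists_nonzero ξ hsum hξ
  exact hpos.trans_le (hmax (mem_coe.mpr hj))

lemma min_zero_mul_add_max_zero_mul_le {a x lo hi : ℝ} (hlo : lo ≤ x) (hhi : x ≤ hi) :
    min 0 a * hi + max 0 a * lo ≤ a * x := by
  rcases le_total 0 a with ha | ha
  · simpa [min_eq_left ha, max_eq_right ha] using mul_le_mul_of_nonneg_left hlo ha
  · simpa [min_eq_right ha, max_eq_left ha] using mul_le_mul_of_nonpos_left hhi ha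

variable [DecidableEq ι]

lemma row_sum_ge_of_isMaxOn (A : ι → ι → ℝ) {i : ι} {lo : ℝ}
    (hi : i ∈ S) (hmax : IsMaxOn ξ S i) (hlo : ∀ j ∈ S, lo ≤ ξ j) :
    (A i i + ∑ j ∈ S.erase i, min 0 (A i j)) * ξ i + (∑ j ∈ S.erase i, max 0 (A i j)) * lo
      ≤ ∑ j ∈ S, A i j * ξ j := by
  have hoff : ∑ j ∈ S.erase i, (min 0 (A i j) * ξ i + max 0 (A i j) * lo)
      ≤ ∑ j ∈ S.erase i, A i j * ξ j :=
    sum_le_sum fun j hj => have hjS := mem_of_mem_erase hj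
      min_zero_mul_add_max_zero_mul_le (hlo j hjS) (hmax (mem_coe.mpr hjS))
  rw [sum_add_distrib, ← sum_mul, ← sum_mul] at hoff
  rw [← add_sum_erase S _ hi]
  linarith

lemma mul_sub_le_row_sum_sub (A : ι → ι → ℝ) {p q : ι} {m M : ℝ}
    (hm : ∀ i ∈ S, m ≤ A i i + ∑ j ∈ S.erase i, min 0 (A i j))
    (hM : ∀ i ∈ S, ∑ j ∈ S.erase i, max 0 (A i j) ≤ M)
    (hp : p ∈ S) (hq : q ∈ S) (hmax : IsMaxOn ξ S p) (hmin : IsMinOn ξ S q)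
    (hξp : 0 ≤ ξ p) (hξq : ξ q ≤ 0) :
    (m - M) * (ξ p - ξ q) ≤ ∑ j ∈ S, A p j * ξ j - ∑ j ∈ S, A q j * ξ j := by
  have hrow_p := row_sum_ge_of_isMaxOn A hp hmax fun j hj => hmin (mem_coe.mpr hj)
  -- the upper bound for row `q` is the same lemma applied to `-ξ`
  have hrow_q := row_sum_ge_of_isMaxOn A hq hmin.neg
    fun j hj => neg_le_neg (hmax (mem_coe.mpr hj))
  simp only [mul_neg, sum_neg_distrib] at hrow_q
  have := mul_le_mul_of_nonneg_right (hm p hp) hξp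
  have := mul_le_mul_of_nonpos_right (hm q hq) hξq
  have := mul_le_mul_of_nonpos_right (hM p hp) hξq
  have := mul_le_mul_of_nonneg_right (hM q hq) hξp
  linarith

theorem rdd_explicit_eta_general (N : ℤ) (hN : 1 ≤ N) (A : ℤ → ℤ → ℝ) (γ : ℝ)
    (hne : (Finset.Icc (-N+1) N).Nonempty)
    (hA : (Finset.Icc (-N+1) N).inf' hne
        (fun i => A i i + ∑ j ∈ (Finset.Icc (-N+1) N).erase i, min 0 (A i j))
      - (Finset.Icc (-N+1) N).sup' hne
        (fun i => ∑ j ∈ (Finset.Icc (-N+1) N).erase i, max 0 (A i j)) = γ)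
    (ξ : ℤ → ℝ) (hsum : (∑ j ∈ Finset.Icc (-N+1) N, ξ j) = 0)
    (hξne : ∃ j ∈ Finset.Icc (-N+1) N, ξ j ≠ 0)
    (p q : ℤ) (hp : p ∈ Finset.Icc (-N+1) N) (hq : q ∈ Finset.Icc (-N+1) N)
    (hmax : ξ p = (Finset.Icc (-N+1) N).sup' hne ξ)
    (hmin : ξ q = (Finset.Icc (-N+1) N).inf' hne ξ)
    (η : ℤ → ℝ)
    (hη : η = fun i => if i = p then (N:ℝ)/2 else if i = q then -(N:ℝ)/2 else 0) :
    (∑ j ∈ Finset.Icc (-N+1) N, η j) = 0 ∧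
    (1/(N:ℝ)) * ∑ j ∈ Finset.Icc (-N+1) N, |η j| = 1 ∧
    γ * (|ξ p| + |ξ q|) ≤
      2 * ((1/(N:ℝ)) * ∑ i ∈ Finset.Icc (-N+1) N,
        (∑ j ∈ Finset.Icc (-N+1) N, A i j * ξ j) * η i) := by
  have hN_pos : (0:ℝ) < N := by exact_mod_cast hN
  generalize Icc (-N+1) N = S at *
  have hmax_p : IsMaxOn ξ S p := fun j hj => hmax ▸ le_sup' ξ (mem_coe.mp hj)
  have hmin_q : IsMinOn ξ S q := fun j hj => hmin ▸ inf'_le ξ (mem_coe.mp hj)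
  have hξp : 0 < ξ p := pos_of_isMaxOn_of_sum_eq_zero hmax_p hsum hξne
  have hξq : ξ q < 0 := neg_pos.mp <| pos_of_isMaxOn_of_sum_eq_zero (ξ := fun j => -ξ j)
    hmin_q.neg (by rw [sum_neg_distrib, hsum, neg_zero]) (by simpa using hξne)
  have hpq : p ≠ q := fun h => by rw [h] at hξp; linarith
  have h_off : ∀ c ∈ S, c ≠ p ∧ c ≠ q → η c = 0 := fun c _ hc => by
    simp [hη, hc.1, hc.2]
  refine ⟨?_, ?_, ?_⟩
  · rw [sum_eq_add_of_mem p q hp hq hpq h_off]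
    simp only [hη, hpq.symm, ↓reduceIte]
    ring
  · rw [sum_eq_add_of_mem p q hp hq hpq fun c hc hc' => by rw [h_off c hc hc', abs_zero]]
    simp only [hη, hpq.symm, ↓reduceIte, neg_div, abs_neg, abs_of_pos (half_pos hN_pos)]
    field_simp
    ring
  · have h_pair : ∑ i ∈ S, (∑ j ∈ S, A i j * ξ j) * η i
        = (N:ℝ) / 2 * (∑ j ∈ S, A p j * ξ j - ∑ j ∈ S, A q j * ξ j) := by
      rw [sum_eq_add_of_mem p q hp hq hpq fun c hc hc' => by rw [h_off c hc hc', mul_zero]]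
      simp only [hη, hpq.symm, ↓reduceIte]
      ring
    calc γ * (|ξ p| + |ξ q|) = γ * (ξ p - ξ q) := by
          rw [abs_of_pos hξp, abs_of_neg hξq, sub_eq_add_neg]
      _ ≤ ∑ j ∈ S, A p j * ξ j - ∑ j ∈ S, A q j * ξ j := by
          rw [← hA]
          exact mul_sub_le_row_sum_sub A (fun i hi => inf'_le _ hi)
            (fun i hi => le_sup' (fun i => ∑ j ∈ S.erase i, max 0 (A i j)) hi)
            hp hq hmax_p hmin_q hξp.le hξq.le
      _ = _ := by rw [h_pair]; field_simp

/-- The explicit choice `η_p = 1/(2ε)`, `η_q = -1/(2ε)`, `η_i = 0` otherwise, where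
`ξ_p = max ξ` and `ξ_q = min ξ`, is mean-zero, has `‖η‖_{ℓ¹_ε} = 1`, and satisfies
`2⟨Aξ, η⟩ ≥ γ(|ξ_p| + |ξ_q|)` under the diagonal dominance hypothesis. -/
theorem rdd_explicit_eta (N : ℤ) (hN : 1 ≤ N) (A : ℤ → ℤ → ℝ) (γ : ℝ) (hγ : 0 < γ)
    (hne : (Finset.Icc (-N+1) N).Nonempty)
    (hA : (Finset.Icc (-N+1) N).inf' hne
        (fun i => A i i + ∑ j ∈ (Finset.Icc (-N+1) N).erase i, min 0 (A i j))
      - (Finset.Icc (-N+1) N).sup' hne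
        (fun i => ∑ j ∈ (Finset.Icc (-N+1) N).erase i, max 0 (A i j)) = γ)
    (ξ : ℤ → ℝ) (hsum : (∑ j ∈ Finset.Icc (-N+1) N, ξ j) = 0)
    (hξne : ∃ j ∈ Finset.Icc (-N+1) N, ξ j ≠ 0)
    (p q : ℤ) (hp : p ∈ Finset.Icc (-N+1) N) (hq : q ∈ Finset.Icc (-N+1) N)
    (hmax : ξ p = (Finset.Icc (-N+1) N).sup' hne ξ)
    (hmin : ξ q = (Finset.Icc (-N+1) N).inf' hne ξ)
    (η : ℤ → ℝ)
    (hη : η = fun i => if i = p then (N:ℝ)/2 else if i = q then -(N:ℝ)/2 else 0) :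
    (∑ j ∈ Finset.Icc (-N+1) N, η j) = 0 ∧
    (1/(N:ℝ)) * ∑ j ∈ Finset.Icc (-N+1) N, |η j| = 1 ∧
    γ * (|ξ p| + |ξ q|) ≤
      2 * ((1/(N:ℝ)) * ∑ i ∈ Finset.Icc (-N+1) N,
        (∑ j ∈ Finset.Icc (-N+1) N, A i j * ξ j) * η i) :=
  rdd_explicit_eta_general N hN A γ hne hA ξ hsum hξne p q hp hq hmax hmin η hη
end

section
/- Let L_2 be defined on v ∈ R^{2N+1} by (L_2 v)_j = 4ε^{-2}(−v_{j+1} + 2v_j − v_{j-1}) for j ∈ C and (L_2 v)_j = ε^{-2}(−v_{j+2} + 2v_j − v_{j-2}) for j ∈ A. Then for all v ∈ R^{2N+1} and all w ∈ R^{2N+1} with w_{-N} = w_N = 0: ε Σ_{j=-N+1}^{N-1} (L_2 v)_j w_j = Σ_{j=-N+1}^{-K} ε·4 Dv_j Dw_j + Σ_{j=-K+1}^{K} ε (Dv_{j-1} + 2Dv_j + Dv_{j+1}) Dw_j + Σ_{j=K+1}^{N} ε·4 Dv_j Dw_j + ε^2 (D^3 v)_{-K+1} w_{-K} − ε^2 (D^3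 v)_{K+2} w_K. -/
/-- Lattice spacing `ε = 1/N`. -/
noncomputable def eps (N : ℤ) : ℝ := 1 / (N : ℝ)

/-- Backward difference `Dv_j = (v_j - v_{j-1})/ε`. -/
noncomputable def Dd (N : ℤ) (v : ℤ → ℝ) (j : ℤ) : ℝ := (v j - v (j-1)) / eps N

/-- Third backward difference `D³v_j = ε⁻²(Dv_j - 2Dv_{j-1} + Dv_{j-2})`. -/
noncomputable def D3 (N : ℤ) (v : ℤ → ℝ) (j : ℤ) : ℝ :=
  (Dd N v j - 2 * Dd N v (j-1) + Dd N v (j-2)) / (eps N)^2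

/-- Next-nearest neighbor QCF operator: atomistic stencil on `A = {-K,…,K}`,
continuum (local) stencil elsewhere. -/
noncomputable def L2op (N K : ℤ) (v : ℤ → ℝ) (j : ℤ) : ℝ :=
  if -K ≤ j ∧ j ≤ K then (-v (j+2) + 2 * v j - v (j-2)) / (eps N)^2
  else 4 * (-v (j+1) + 2 * v j - v (j-1)) / (eps N)^2

/-!
Multiplied by `ε`, `L₂ v` is minus the discrete divergence of a bond flux `σ`: `4 Dv_j` on the
continuum bonds and `Dv_{j-1} + 2 Dv_j + Dv_{j+1}` on the bonds inside `A`. The identity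
`σ_j - σ_{j+1} = ε L₂ v_j` fails only at the interface sites `±K`, where the two stencils meet and
leave the defects `± ε² D³v`. Summation by parts against `w`, which vanishes at `±N`, then turns
`ε ∑ (L₂ v)_j w_j` into `∑ σ_j (w_j - w_{j-1})` plus these two defects.
-/

open Finset

theorem Finset.sum_Ioc_add_sum_Ioc {α M : Type*} [LinearOrder α] [LocallyFiniteOrder α]
    [AddCommMonoid M] (f : α → M) {a b c : α} (hab : a ≤ b) (hbc : b ≤ c) :
    ∑ j ∈ Ioc a b, f j + ∑ j ∈ Ioc b c, f j = ∑ j ∈ Ioc a c, f j := by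
  rw [← sum_union (Ioc_disjoint_Ioc_of_le le_rfl), Ioc_union_Ioc_eq_Ioc hab hbc]

theorem Int.sum_Ioc_mul_sub_eq_sum_Ioo {R : Type*} [CommRing R] (σ w : ℤ → R) {a b : ℤ}
    (hab : a < b) :
    ∑ j ∈ Ioc a b, σ j * (w j - w (j - 1)) =
      ∑ j ∈ Ioo a b, (σ j - σ (j + 1)) * w j + σ b * w b - σ (a + 1) * w a := by
  induction b, Int.add_one_le_iff.mpr hab using Int.leInduction with
  | base =>
    rw [Ioo_add_one_right_eq_Ioc, Ioc_self, ← insert_Ioc_right_eq_Ioc_add_one le_rfl, Ioc_self]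
    simp only [insert_empty, sum_singleton, sum_empty, add_sub_cancel_right]
    ring
  | succ b hb ih =>
    have hab : a < b := by omega
    rw [← insert_Ioc_right_eq_Ioc_add_one hab.le, sum_insert (by simp), ih hab,
      Ioo_add_one_right_eq_Ioc, ← Ioo_insert_right hab, sum_insert (by simp)]
    ring_nf

section Fluxes

variable {N : ℤ} (K : ℤ) (v : ℤ → ℝ) (j : ℤ)

lemma eps_ne_zero (hN : N ≠ 0) : eps N ≠ 0 :=
  one_div_ne_zero (Int.cast_ne_zero.mpr hN)

lemma eps_mul_Dd (hN : N ≠ 0) : eps N * Dd N v j = v j - v (j - 1) := by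
  unfold Dd
  field_simp [eps_ne_zero hN]

noncomputable def atomFlux (N : ℤ) (v : ℤ → ℝ) (j : ℤ) : ℝ :=
  Dd N v (j - 1) + 2 * Dd N v j + Dd N v (j + 1)

noncomputable def contFlux (N : ℤ) (v : ℤ → ℝ) (j : ℤ) : ℝ := 4 * Dd N v j

/-- The flux through the bond `(j - 1, j)`: atomistic on the bonds inside `A`. -/
noncomputable def flux (N K : ℤ) (v : ℤ → ℝ) (j : ℤ) : ℝ :=
  if j ∈ Ioc (-K) K then atomFlux N v j else contFlux N v j

lemma eps_mul_L2op_of_atomistic (hN : N ≠ 0) (hj : -K ≤ j ∧ j ≤ K) :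
    eps N * L2op N K v j = atomFlux N v j - atomFlux N v (j + 1) := by
  unfold L2op atomFlux Dd
  rw [if_pos hj]
  field_simp [eps_ne_zero hN]
  ring_nf

lemma eps_mul_L2op_of_continuum (hN : N ≠ 0) (hj : ¬(-K ≤ j ∧ j ≤ K)) :
    eps N * L2op N K v j = contFlux N v j - contFlux N v (j + 1) := by
  unfold L2op contFlux Dd
  rw [if_neg hj]
  field_simp [eps_ne_zero hN]
  ring_nf

lemma atomFlux_sub_contFlux (hN : N ≠ 0) :
    atomFlux N v j - contFlux N v j = eps N ^ 2 * D3 N v (j + 1) := by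
  unfold atomFlux contFlux D3
  field_simp [eps_ne_zero hN]
  ring_nf

lemma eps_mul_L2op (hN : N ≠ 0) (hK : 0 < K) :
    eps N * L2op N K v j =
      flux N K v j - flux N K v (j + 1) + (if j = -K then eps N ^ 2 * D3 N v (-K + 1) else 0)
        - (if j = K then eps N ^ 2 * D3 N v (K + 2) else 0) := by
  have hA := atomFlux_sub_contFlux v (-K) hN
  have hC := atomFlux_sub_contFlux v (K + 1) hN
  rw [show K + 1 + 1 = K + 2 by ring] at hC
  unfold flux
  simp only [mem_Ioc]
  rcases lt_trichotomy j (-K) with hj | rfl | hj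
  · rw [eps_mul_L2op_of_continuum K v j hN (by omega), if_neg (by omega), if_neg (by omega),
      if_neg (by omega), if_neg (by omega)]
    ring
  · rw [eps_mul_L2op_of_atomistic K v _ hN (by omega), if_neg (by omega), if_pos (by omega),
      if_pos rfl, if_neg (by omega)]
    linear_combination hA
  rcases lt_trichotomy j K with hj' | hj' | hj'
  · rw [eps_mul_L2op_of_atomistic K v j hN (by omega), if_pos (by omega), if_pos (by omega),
      if_neg (by omega), if_neg (by omega)]
    ring
  · subst j
    rw [eps_mul_L2op_of_atomistic K v _ hN (by omega), if_pos (by omega), if_neg (by omega),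
      if_neg (by omega), if_pos rfl]
    linear_combination -hC
  · rw [eps_mul_L2op_of_continuum K v j hN (by omega), if_neg (by omega), if_neg (by omega),
      if_neg (by omega), if_neg (by omega)]
    ring

lemma sum_Ioc_flux_mul_sub (w : ℤ → ℝ) (hN : N ≠ 0) (hK : 0 ≤ K) (hKN : K ≤ N) :
    ∑ j ∈ Ioc (-N) N, flux N K v j * (w j - w (j - 1)) =
      (∑ j ∈ Ioc (-N) (-K), eps N * 4 * Dd N v j * Dd N w j)
        + (∑ j ∈ Ioc (-K) K, eps N * (Dd N v (j-1) + 2 * Dd N v j + Dd N v (j+1)) * Dd N w j)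
        + (∑ j ∈ Ioc K N, eps N * 4 * Dd N v j * Dd N w j) := by
  rw [← sum_Ioc_add_sum_Ioc _ (by omega : -N ≤ -K) (by omega : -K ≤ N),
    ← sum_Ioc_add_sum_Ioc _ (by omega : -K ≤ K) hKN, add_assoc]
  congr 1
  · refine sum_congr rfl fun j hj => ?_
    rw [mem_Ioc] at hj
    rw [flux, if_neg (by rw [mem_Ioc]; omega), contFlux, ← eps_mul_Dd w j hN]
    ring
  congr 1
  · refine sum_congr rfl fun j hj => ?_
    rw [flux, if_pos hj, atomFlux, ← eps_mul_Dd w j hN]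
    ring
  · refine sum_congr rfl fun j hj => ?_
    rw [mem_Ioc] at hj
    rw [flux, if_neg (by rw [mem_Ioc]; omega), contFlux, ← eps_mul_Dd w j hN]
    ring

end Fluxes

theorem L2_weak_form_general (N K : ℤ) (hK0 : 0 < K) (hKN : K < N - 1)
    (v w : ℤ → ℝ) (hwL : w (-N) = 0) (hwR : w N = 0) :
    eps N * ∑ j ∈ Finset.Icc (-N+1) (N-1), L2op N K v j * w j =
      (∑ j ∈ Finset.Icc (-N+1) (-K), eps N * 4 * Dd N v j * Dd N w j)
      + (∑ j ∈ Finset.Icc (-K+1) K,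
          eps N * (Dd N v (j-1) + 2 * Dd N v j + Dd N v (j+1)) * Dd N w j)
      + (∑ j ∈ Finset.Icc (K+1) N, eps N * 4 * Dd N v j * Dd N w j)
      + (eps N)^2 * D3 N v (-K+1) * w (-K)
      - (eps N)^2 * D3 N v (K+2) * w K := by
  have hN : N ≠ 0 := by omega
  simp only [Icc_add_one_left_eq_Ioc, Ioc_sub_one_right_eq_Ioo]
  rw [← sum_Ioc_flux_mul_sub K v w hN hK0.le (by omega),
    Int.sum_Ioc_mul_sub_eq_sum_Ioo _ _ (by omega), hwL, hwR, mul_sum]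
  simp_rw [← mul_assoc, eps_mul_L2op K v _ hN hK0]
  simp only [add_mul, sub_mul, sum_add_distrib, sum_sub_distrib, ite_mul, zero_mul, sum_ite_eq',
    mem_Ioo]
  rw [if_pos (by omega), if_pos (by omega)]
  ring

/-- Weak (divergence) form of `L₂`: summation by parts with interface terms. -/
theorem L2_weak_form (N K : ℤ) (hN : 1 ≤ N) (hK0 : 0 < K) (hKN : K < N - 1)
    (v w : ℤ → ℝ) (hwL : w (-N) = 0) (hwR : w N = 0) :
    eps N * ∑ j ∈ Finset.Icc (-N+1) (N-1), L2op N K v j * w j =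
      (∑ j ∈ Finset.Icc (-N+1) (-K), eps N * 4 * Dd N v j * Dd N w j)
      + (∑ j ∈ Finset.Icc (-K+1) K,
          eps N * (Dd N v (j-1) + 2 * Dd N v j + Dd N v (j+1)) * Dd N w j)
      + (∑ j ∈ Finset.Icc (K+1) N, eps N * 4 * Dd N v j * Dd N w j)
      + (eps N)^2 * D3 N v (-K+1) * w (-K)
      - (eps N)^2 * D3 N v (K+2) * w K :=
  L2_weak_form_general N K hK0 hKN v w hwL hwR
end
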